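/- arXiv:2511.18658 — 6 statements merged into one kernel-verified Lean document; each statement's English description precedes it below -/
import Mathlib

section
/- For every δ with 0 < δ < 1/2, in the 3×3 zero-sum matrix game with row-player payoff matrix U = [[1,δ,1/2],[δ,1,1/2],[0,0,1/2]], the column player's Nash equilibrium strategy is uniquely (0,0,1), the game value is 1/2, and the portfolio consisting of only the single column strategy (0,0,1) has pessimistic exploitability equal to 1/2: the row strategy (0,0,1) is a Nash equilibrium of the restricted game, and against it the column player can hold the row player to payoff 0. -/
open Finset Matrix

noncomputable section

/-- Mixed strategies over a finite action set. -/
def simplex (α : Type*) [Fintype α] : Set (α → ℝ) :=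
  {x | (∀ i, 0 ≤ x i) ∧ ∑ i, x i = 1}

/-- Expected payoff to the row (maximizing) player. -/
def pay {α β : Type*} [Fintype α] [Fintype β]
    (U : Matrix α β ℝ) (x : α → ℝ) (y : β → ℝ) : ℝ :=
  ∑ i, ∑ j, x i * U i j * y j

/-- Nash equilibrium of the zero-sum game with row payoff matrix `U`. -/
def isNash {α β : Type*} [Fintype α] [Fintype β]
    (U : Matrix α β ℝ) (x : α → ℝ) (y : β → ℝ) : Prop :=
  x ∈ simplex α ∧ y ∈ simplex β ∧
  (∀ x' ∈ simplex α, pay U x' y ≤ pay U x y) ∧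
  (∀ y' ∈ simplex β, pay U x y ≤ pay U x y')

/-- Worst-case (over pure columns) payoff of row strategy `x`. -/
def wc {α β : Type*} [Fintype α] [Fintype β]
    (U : Matrix α β ℝ) (x : α → ℝ) : ℝ :=
  sInf (Set.range fun j : β => ∑ i, x i * U i j)

end

/-! Against any column strategy `y`, the row mix `(1/2, 1/2, 0)` earns
`1/2 + δ/2 (y₀ + y₁)`, while the column player can always secure `1/2` with its third column.
So at an equilibrium `y₀ + y₁ = 0` and the value is `1/2`. The third column of `U` is constant, so
every row strategy, in particular `(0, 0, 1)`, is an equilibrium strategy of the restricted game,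
and `(0, 0, 1)` earns `0` against the first column. -/

section General

variable {α β : Type*} [Fintype α] [Fintype β]

theorem pay_of_forall_eq {U : Matrix α β ℝ} {c : ℝ} (hU : ∀ i j, U i j = c)
    {x : α → ℝ} {y : β → ℝ} (hx : x ∈ simplex α) (hy : y ∈ simplex β) : pay U x y = c := by
  simp only [pay, hU, ← sum_mul, ← mul_sum, hx.2, hy.2]
  ring

theorem isNash_of_forall_eq {U : Matrix α β ℝ} {c : ℝ} (hU : ∀ i j, U i j = c)
    {x : α → ℝ} {y : β → ℝ} (hx : x ∈ simplex α) (hy : y ∈ simplex β) : isNash U x y :=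
  ⟨hx, hy, fun _ hx' => (pay_of_forall_eq hU hx' hy).trans_le (pay_of_forall_eq hU hx hy).ge,
    fun _ hy' => (pay_of_forall_eq hU hx hy).trans_le (pay_of_forall_eq hU hx hy').ge⟩

theorem wc_le (U : Matrix α β ℝ) (x : α → ℝ) (j : β) : wc U x ≤ ∑ i, x i * U i j :=
  csInf_le (Set.finite_range _).bddBelow ⟨j, rfl⟩

theorem wc_nonneg {U : Matrix α β ℝ} (hU : ∀ i j, 0 ≤ U i j) {x : α → ℝ} (hx : ∀ i, 0 ≤ x i) :
    0 ≤ wc U x :=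
  Real.sInf_nonneg <| Set.forall_mem_range.2 fun j =>
    sum_nonneg fun i _ => mul_nonneg (hx i) (hU i j)

end General

section GameMatrix

variable {δ : ℝ}

theorem mem_simplex_fin_three {x : Fin 3 → ℝ} :
    x ∈ simplex (Fin 3) ↔ 0 ≤ x 0 ∧ 0 ≤ x 1 ∧ 0 ≤ x 2 ∧ x 0 + x 1 + x 2 = 1 := by
  simp [simplex, Fin.forall_fin_succ, Fin.sum_univ_three, and_assoc]

theorem third_vertex_mem_simplex : (![0, 0, 1] : Fin 3 → ℝ) ∈ simplex (Fin 3) := by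
  rw [mem_simplex_fin_three]; norm_num [Matrix.cons_val_two]

noncomputable abbrev gameMatrix (δ : ℝ) : Matrix (Fin 3) (Fin 3) ℝ :=
  !![1, δ, 1/2; δ, 1, 1/2; 0, 0, 1/2]

theorem gameMatrix_nonneg (hδ : 0 ≤ δ) (i j : Fin 3) : 0 ≤ gameMatrix δ i j := by
  fin_cases i <;> fin_cases j <;> simp [hδ]

theorem pay_gameMatrix (x y : Fin 3 → ℝ) : pay (gameMatrix δ) x y =
    x 0 * (y 0 + δ * y 1 + y 2 / 2) + x 1 * (δ * y 0 + y 1 + y 2 / 2) + x 2 * (y 2 / 2) := by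
  simp only [pay, Fin.sum_univ_three, of_apply, cons_val', cons_val_zero, cons_val_one,
    cons_val_fin_one, Matrix.cons_val]
  ring

theorem pay_gameMatrix_third_column {x : Fin 3 → ℝ} (hx : x ∈ simplex (Fin 3)) :
    pay (gameMatrix δ) x ![0, 0, 1] = 1/2 := by
  obtain ⟨-, -, -, hsum⟩ := mem_simplex_fin_three.1 hx
  rw [pay_gameMatrix]
  simp only [cons_val_zero, cons_val_one, Matrix.cons_val]
  linear_combination hsum / 2

theorem pay_gameMatrix_half_half {y : Fin 3 → ℝ} (hy : y ∈ simplex (Fin 3)) :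
    pay (gameMatrix δ) ![1/2, 1/2, 0] y = 1/2 + δ / 2 * (y 0 + y 1) := by
  obtain ⟨-, -, -, hsum⟩ := mem_simplex_fin_three.1 hy
  rw [pay_gameMatrix]
  simp only [cons_val_zero, cons_val_one, Matrix.cons_val]
  linear_combination hsum / 2

theorem column_eq_and_pay_eq_of_isNash_gameMatrix (hδ : 0 < δ) {x y : Fin 3 → ℝ}
    (h : isNash (gameMatrix δ) x y) :
    y = ![0, 0, 1] ∧ pay (gameMatrix δ) x y = 1/2 := by
  obtain ⟨hx, hy, hrow, hcol⟩ := h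
  have hhalf : (![1/2, 1/2, 0] : Fin 3 → ℝ) ∈ simplex (Fin 3) := by
    rw [mem_simplex_fin_three]; norm_num [Matrix.cons_val_two]
  have hlower := pay_gameMatrix_half_half (δ := δ) hy ▸ hrow _ hhalf
  have hupper := pay_gameMatrix_third_column (δ := δ) hx ▸ hcol _ third_vertex_mem_simplex
  obtain ⟨hy0, hy1, -, hsum⟩ := mem_simplex_fin_three.1 hy
  have hy01 : y 0 + y 1 = 0 := by nlinarith
  refine ⟨?_, by nlinarith⟩
  ext i
  fin_cases i <;> simp <;> linarith

end GameMatrix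

theorem stmt2_general (δ : ℝ) (h0 : 0 < δ) :
    let U : Matrix (Fin 3) (Fin 3) ℝ := !![1,δ,1/2; δ,1,1/2; 0,0,1/2]
    let UR : Matrix (Fin 3) (Fin 1) ℝ := Matrix.of fun i _ => U i 2
    (∀ x y, isNash U x y → y = ![0,0,1]) ∧
    (∀ x y, isNash U x y → pay U x y = 1/2) ∧
    (∃ yr, isNash UR ![0,0,1] yr) ∧
    wc U ![0,0,1] = 0 ∧
    (∀ x y, isNash UR x y → 1/2 - wc U x ≤ 1/2) ∧
    (∃ x y, isNash UR x y ∧ 1/2 - wc U x = 1/2) := by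
  intro U UR
  have hUR : ∀ i j, UR i j = 1/2 := fun i _ => by fin_cases i <;> rfl
  have hNashR : isNash UR ![0, 0, 1] (Pi.single 0 1) :=
    isNash_of_forall_eq hUR third_vertex_mem_simplex (single_mem_stdSimplex ℝ 0)
  have hwc : wc U ![0, 0, 1] = 0 := by
    refine le_antisymm ((wc_le U _ 0).trans_eq ?_) (wc_nonneg (gameMatrix_nonneg h0.le)
      third_vertex_mem_simplex.1)
    simp [U, Fin.sum_univ_three]
  have hfull := fun x y (h : isNash U x y) => column_eq_and_pay_eq_of_isNash_gameMatrix h0 h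
  refine ⟨fun x y h => (hfull x y h).1, fun x y h => (hfull x y h).2,
    ⟨_, hNashR⟩, hwc, fun x y h => ?_, ⟨_, _, hNashR, by rw [hwc]; norm_num⟩⟩
  linarith [wc_nonneg (gameMatrix_nonneg h0.le) h.1.1]

theorem stmt2 (δ : ℝ) (h0 : 0 < δ) (h1 : δ < 1/2) :
    let U : Matrix (Fin 3) (Fin 3) ℝ := !![1,δ,1/2; δ,1,1/2; 0,0,1/2]
    let UR : Matrix (Fin 3) (Fin 1) ℝ := Matrix.of fun i _ => U i 2
    (∀ x y, isNash U x y → y = ![0,0,1]) ∧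
    (∀ x y, isNash U x y → pay U x y = 1/2) ∧
    (∃ yr, isNash UR ![0,0,1] yr) ∧
    wc U ![0,0,1] = 0 ∧
    (∀ x y, isNash UR x y → 1/2 - wc U x ≤ 1/2) ∧
    (∃ x y, isNash UR x y ∧ 1/2 - wc U x = 1/2) :=
  stmt2_general δ h0
end

section
/- For every δ with 0 < δ < 1/2, in the 3×3 zero-sum matrix game with row payoff matrix U = [[1,δ,1/2],[δ,1,1/2],[0,0,1/2]], no pure portfolio of size 1 (i.e., no single column) has pessimistic exploitability 0, even though the column player's unique Nash equilibrium (0,0,1) has support of size 1. -/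
open Finset Matrix

section General

variable {α β : Type*} [Fintype α] [Fintype β]

theorem single_mem_simplex [DecidableEq α] (k : α) : Pi.single k 1 ∈ simplex α :=
  ⟨fun i => by by_cases h : i = k <;> simp [h], by simp⟩

theorem eq_one_of_mem_simplex_fin_one {y : Fin 1 → ℝ} (hy : y ∈ simplex (Fin 1)) :
    y = fun _ => 1 := by
  funext i
  simpa [Subsingleton.elim i 0] using hy.2

theorem isNash.pay_le {U : Matrix α β ℝ} {x : α → ℝ} {y : β → ℝ} (h : isNash U x y)
    {x' : α → ℝ} (hx' : x' ∈ simplex α) {y' : β → ℝ} (hy' : y' ∈ simplex β) :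
    pay U x' y ≤ pay U x y' :=
  (h.2.2.1 x' hx').trans (h.2.2.2 y' hy')

theorem pay_single_column (c : α → ℝ) (x : α → ℝ) :
    pay (Matrix.of fun i (_ : Fin 1) => c i) x (fun _ => 1) = ∑ i, x i * c i := by
  simp [pay]

theorem isNash_single_column [DecidableEq α] (c : α → ℝ) {k : α} (hk : ∀ i, c i ≤ c k) :
    isNash (Matrix.of fun i (_ : Fin 1) => c i) (Pi.single k 1) (fun _ => 1) := by
  have hpay : pay (Matrix.of fun i (_ : Fin 1) => c i) (Pi.single k 1) (fun _ => 1) = c k := by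
    rw [pay_single_column]; simp [Pi.single_apply]
  refine ⟨single_mem_simplex k, ⟨fun _ => zero_le_one, by simp⟩, fun x' hx' => ?_, fun y' hy' => ?_⟩
  · rw [hpay, pay_single_column]
    calc ∑ i, x' i * c i ≤ ∑ i, x' i * c k :=
          Finset.sum_le_sum fun i _ => mul_le_mul_of_nonneg_left (hk i) (hx'.1 i)
      _ = c k := by rw [← Finset.sum_mul, hx'.2, one_mul]
  · rw [eq_one_of_mem_simplex_fin_one hy']

theorem exists_isNash_single_column_wc_le [DecidableEq α] (U : Matrix α β ℝ) {j k : β} {r : α}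
    (hr : ∀ i, U i j ≤ U r j) :
    ∃ x y, isNash (Matrix.of fun i (_ : Fin 1) => U i j) x y ∧ wc U x ≤ U r k :=
  ⟨_, _, isNash_single_column (fun i => U i j) hr,
    by simpa [Pi.single_apply] using wc_le U (Pi.single r 1) k⟩

end General

/-- The row mix `(1/2, 1/2, 0)` earns `(1 + δ)/2` against each of the first two columns, more
than the `1/2` that the third column concedes, so an equilibrium column strategy avoids them. -/
theorem column_eq_of_isNash {δ : ℝ} (hδ : 0 < δ) {x y : Fin 3 → ℝ}
    (h : isNash !![1,δ,1/2; δ,1,1/2; 0,0,1/2] x y) : y = ![0,0,1] := by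
  have hmix : (![1/2,1/2,0] : Fin 3 → ℝ) ∈ simplex (Fin 3) :=
    ⟨fun i => by fin_cases i <;> norm_num, by norm_num [Fin.sum_univ_three]; rfl⟩
  have hle : (1 + δ) / 2 * (y 0 + y 1) + y 2 / 2 ≤ (x 0 + x 1 + x 2) / 2 := by
    have := h.pay_le hmix (single_mem_simplex 2)
    simp only [pay, of_apply, cons_val', cons_val_fin_one, Fin.sum_univ_three, cons_val_zero,
      cons_val_one, Matrix.cons_val, Pi.single_apply, Fin.reduceEq, ↓reduceIte] at this
    linarith
  obtain ⟨⟨-, hx1⟩, ⟨hy0, hy1⟩, -⟩ := h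
  rw [Fin.sum_univ_three] at hx1 hy1
  have hδy : δ * (y 0 + y 1) ≤ 0 := by linarith
  have hy01 : y 0 + y 1 ≤ 0 := nonpos_of_mul_nonpos_right hδy hδ
  have hy₀ : y 0 = 0 := by linarith [hy0 0, hy0 1]
  have hy₁ : y 1 = 0 := by linarith [hy0 0, hy0 1]
  have hy₂ : y 2 = 1 := by linarith
  funext i
  fin_cases i <;> simp [hy₀, hy₁, hy₂]

theorem stmt3 (δ : ℝ) (h0 : 0 < δ) (h1 : δ < 1/2) :
    let U : Matrix (Fin 3) (Fin 3) ℝ := !![1,δ,1/2; δ,1,1/2; 0,0,1/2]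
    (∀ x y, isNash U x y → y = ![0,0,1]) ∧
    (∀ j : Fin 3,
      ∃ x y, isNash (Matrix.of fun i (_ : Fin 1) => U i j) x y ∧ 0 < 1/2 - wc U x) := by
  intro U
  refine ⟨fun x y => column_eq_of_isNash h0, fun j => ?_⟩
  have hδ : δ ≤ 1 := by linarith
  -- a pure best response to column `j` (row 0, 1, 0 respectively) has an entry `δ < 1/2`
  obtain ⟨x, y, hxy, hwc⟩ :
      ∃ x y, isNash (Matrix.of fun i (_ : Fin 1) => U i j) x y ∧ wc U x ≤ δ := by
    fin_cases j
    · exact exists_isNash_single_column_wc_le (r := 0) (k := 1) U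
        fun i => by fin_cases i <;> simp [U, hδ]
    · exact exists_isNash_single_column_wc_le (r := 1) (k := 0) U
        fun i => by fin_cases i <;> simp [U, hδ]
    · exact exists_isNash_single_column_wc_le (r := 0) (k := 1) U
        fun i => by fin_cases i <;> simp [U]
  exact ⟨x, y, hxy, by linarith⟩
end

section
/- In any two-player zero-sum matrix game with row payoff matrix U, if a portfolio P of column strategies ε-dominates every pure column strategy (i.e., for every pure column j there is a mixture p of strategies in P such that for every row strategy x, x^T U p ≤ x^T U e_j + ε), then the pessimistic exploitability of P is at most ε: every Nash equilibrium row strategy x̄ of the restricted game G(A1, P), with restricted-game value v̄, satisfies x̄^T U e_j ≥ v̄ − ε for all pure columns j, and since v̄ ≥ v* (the full-game value), the exploitability of x̄ is at most ε. -/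
open Finset Matrix

theorem stmt8 (m n k : ℕ) (U : Matrix (Fin m) (Fin n) ℝ) (ε : ℝ) (hε : 0 ≤ ε)
    (P : Fin k → (Fin n → ℝ)) (hP : ∀ z, P z ∈ simplex (Fin n))
    (hdom : ∀ j : Fin n, ∃ q ∈ simplex (Fin k),
      ∀ x ∈ simplex (Fin m),
        pay U x (fun j' => ∑ z, q z * P z j') ≤
          pay U x (fun j' => if j' = j then 1 else 0) + ε)
    (vstar : ℝ) (hval : ∃ x y, isNash U x y ∧ pay U x y = vstar) :
    ∀ x y, isNash (Matrix.of fun i z => ∑ j, U i j * P z j) x y →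
      vstar - wc U x ≤ ε := by
  intro x y hN
  set G : Matrix (Fin m) (Fin k) ℝ := Matrix.of fun i z => ∑ j, U i j * P z j with hG
  obtain ⟨hx, hy, hrow, hcol⟩ := hN
  obtain ⟨xs, ys, ⟨hxs, hys, hrs, hcs⟩, hvs⟩ := hval
  -- nonemptiness
  have hkpos : 0 < k := by
    rcases Nat.eq_zero_or_pos k with h | h
    · subst h; have := hy.2; simp at this
    · exact h
  have hnpos : 0 < n := by
    rcases Nat.eq_zero_or_pos n with h | h
    · subst h; have := (hP ⟨0, hkpos⟩).2; simp at this
    · exact h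
  haveI : Nonempty (Fin n) := ⟨⟨0, hnpos⟩⟩
  -- key identity: pay G x q = pay U x (mix of P by q)
  have key : ∀ (x' : Fin m → ℝ) (q : Fin k → ℝ),
      pay G x' q = pay U x' (fun j' => ∑ z, q z * P z j') := by
    intro x' q
    unfold pay
    simp only [hG, Matrix.of_apply, Finset.mul_sum, Finset.sum_mul]
    refine Finset.sum_congr rfl fun i _ => ?_
    rw [Finset.sum_comm]
    refine Finset.sum_congr rfl fun j _ => Finset.sum_congr rfl fun z _ => by ring
  -- mixtures of P are in simplex
  have mix_mem : ∀ q ∈ simplex (Fin k), (fun j' => ∑ z, q z * P z j') ∈ simplex (Fin n) := by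
    intro q hq
    constructor
    · intro j
      exact Finset.sum_nonneg fun z _ => mul_nonneg (hq.1 z) ((hP z).1 j)
    · rw [Finset.sum_comm]
      calc ∑ z, ∑ j, q z * P z j = ∑ z, q z * ∑ j, P z j := by
            simp [Finset.mul_sum]
        _ = 1 := by
            simp only [fun z => (hP z).2, mul_one]; exact hq.2
  -- pure column payoff
  have pure_pay : ∀ (x' : Fin m → ℝ) (j : Fin n),
      pay U x' (fun j' => if j' = j then 1 else 0) = ∑ i, x' i * U i j := by
    intro x' j
    unfold pay
    refine Finset.sum_congr rfl fun i _ => ?_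
    rw [Finset.sum_eq_single j] <;> simp_all
  set vbar := pay G x y with hvbar
  -- vstar ≤ vbar
  have hys' : (fun j' => ∑ z, y z * P z j') ∈ simplex (Fin n) := mix_mem y hy
  have h1 : vstar ≤ vbar := by
    have h2 : pay G xs y ≤ vbar := hrow xs hxs
    have h3 : vstar ≤ pay U xs (fun j' => ∑ z, y z * P z j') := by
      rw [← hvs]; exact hcs _ hys'
    rw [key xs y] at h2
    linarith
  -- wc ≥ vbar - ε
  have hwc : vbar - ε ≤ wc U x := by
    apply le_csInf (Set.range_nonempty _)
    rintro b ⟨j, rfl⟩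
    obtain ⟨q, hq, hqd⟩ := hdom j
    have h4 : vbar ≤ pay G x q := hcol q hq
    rw [key x q] at h4
    have h5 := hqd x hx
    rw [pure_pay x j] at h5
    simp only
    linarith
  linarith
end

section
/- In Rock-Paper-Scissors (row payoff matrix [[0,−1,1],[1,0,−1],[−1,1,0]]), the pure portfolio P_pure = {R, P} (columns 1 and 2) for the column player forces the row player's restricted-game Nash equilibrium strategy to be (0, 2/3, 1/3), whose worst-case full-game payoff is −2/3, giving exploitability 2/3; whereas the mixed portfolio P_mixed = {(1/2,1/2,0), (0,1/2,1/2)} yields the restricted-game equilibrium row strategy (0, 1/3, 2/3), whose worst-case full-game payoff is −1/3, giving exploitability 1/3. Hence a mixed portfolio of size 2 has strictly lower exploitability than the best pure portfolio of size 2 in this game. -/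
open Finset Matrix

lemma mem3 (a b c : ℝ) (ha : 0 ≤ a) (hb : 0 ≤ b) (hc : 0 ≤ c) (h : a + b + c = 1) :
    ![a,b,c] ∈ simplex (Fin 3) := by
  constructor
  · intro i; fin_cases i <;> simpa
  · simp [Fin.sum_univ_three]; linarith

lemma mem2 (a b : ℝ) (ha : 0 ≤ a) (hb : 0 ≤ b) (h : a + b = 1) :
    ![a,b] ∈ simplex (Fin 2) := by
  constructor
  · intro i; fin_cases i <;> simpa
  · simp [Fin.sum_univ_two]; linarith

set_option maxHeartbeats 1600000 in
theorem stmt10 :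
    let U : Matrix (Fin 3) (Fin 3) ℝ := !![0,-1,1; 1,0,-1; -1,1,0]
    let Upure : Matrix (Fin 3) (Fin 2) ℝ := Matrix.of fun i (j : Fin 2) => U i (![0,1] j)
    let Pm : Matrix (Fin 3) (Fin 2) ℝ := !![1/2, 0; 1/2, 1/2; 0, 1/2]
    (∀ x y, isNash Upure x y → x = ![0, 2/3, 1/3]) ∧
    wc U ![0, 2/3, 1/3] = -2/3 ∧
    (∀ x y, isNash (U * Pm) x y → x = ![0, 1/3, 2/3]) ∧
    wc U ![0, 1/3, 2/3] = -1/3 ∧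
    (0 : ℝ) - (-1/3) < 0 - (-2/3) := by
  intro U Upure Pm
  refine ⟨?_, ?_, ?_, ?_, by norm_num⟩
  · intro x y ⟨⟨hxnn, hxs⟩, ⟨hynn, hys⟩, hrow, hcol⟩
    have h1 := hrow ![0, 2/3, 1/3] (mem3 0 (2/3) (1/3) (by norm_num) (by norm_num) (by norm_num) (by norm_num))
    have h2 := hcol ![1,0] (mem2 1 0 (by norm_num) (by norm_num) (by norm_num))
    have h3 := hcol ![0,1] (mem2 0 1 (by norm_num) (by norm_num) (by norm_num))
    have h4 := hcol ![1/3,2/3] (mem2 (1/3) (2/3) (by norm_num) (by norm_num) (by norm_num))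
    simp only [pay, Fin.sum_univ_three, Fin.sum_univ_two, Upure, U, Matrix.of_apply,
      Matrix.cons_val', Matrix.cons_val_zero, Matrix.cons_val_one, Matrix.head_cons,
      Matrix.empty_val', Matrix.cons_val_fin_one, Matrix.head_fin_const,
      Matrix.cons_val_two, Matrix.tail_cons] at h1 h2 h3 h4
    ring_nf at h1 h2 h3 h4
    simp only [Fin.sum_univ_three] at hxs
    simp only [Fin.sum_univ_two] at hys
    have hx0 := hxnn 0; have hx1 := hxnn 1; have hx2 := hxnn 2
    have hy0 := hynn 0; have hy1 := hynn 1
    funext i; fin_cases i <;> simp <;> nlinarith [h1, h2, h3, h4, hxs, hys]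
  · apply le_antisymm
    · apply csInf_le (Set.finite_range _).bddBelow
      exact ⟨2, by norm_num [Fin.sum_univ_three, U, Matrix.cons_val_two, Matrix.tail_cons]⟩
    · apply le_csInf (Set.range_nonempty _)
      rintro b ⟨j, rfl⟩
      fin_cases j <;> norm_num [Fin.sum_univ_three, U, Matrix.cons_val_two, Matrix.tail_cons]
  · intro x y ⟨⟨hxnn, hxs⟩, ⟨hynn, hys⟩, hrow, hcol⟩
    have h1 := hrow ![0, 1/3, 2/3] (mem3 0 (1/3) (2/3) (by norm_num) (by norm_num) (by norm_num) (by norm_num))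
    have h2 := hcol ![1,0] (mem2 1 0 (by norm_num) (by norm_num) (by norm_num))
    have h3 := hcol ![0,1] (mem2 0 1 (by norm_num) (by norm_num) (by norm_num))
    have h4 := hcol ![2/3,1/3] (mem2 (2/3) (1/3) (by norm_num) (by norm_num) (by norm_num))
    have hB : U * Pm = !![-1/2, 0; 1/2, -1/2; 0, 1/2] := by
      ext i j
      fin_cases i <;> fin_cases j <;>
        norm_num [Matrix.mul_apply, Fin.sum_univ_three, U, Pm,
          Matrix.cons_val_two, Matrix.tail_cons, Matrix.vecHead, Matrix.vecTail]
    rw [hB] at h1 h2 h3 h4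
    norm_num [pay, Fin.sum_univ_three, Fin.sum_univ_two,
      Matrix.cons_val_two, Matrix.tail_cons, Matrix.vecHead, Matrix.vecTail] at h1 h2 h3 h4
    simp only [Fin.sum_univ_three] at hxs
    simp only [Fin.sum_univ_two] at hys
    have hx0 := hxnn 0; have hx1 := hxnn 1; have hx2 := hxnn 2
    have hy0 := hynn 0; have hy1 := hynn 1
    funext i; fin_cases i <;> simp <;> nlinarith [h1, h2, h3, h4, hxs, hys]
  · apply le_antisymm
    · apply csInf_le (Set.finite_range _).bddBelow
      exact ⟨0, by norm_num [Fin.sum_univ_three, U, Matrix.cons_val_two, Matrix.tail_cons]⟩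
    · apply le_csInf (Set.range_nonempty _)
      rintro b ⟨j, rfl⟩
      fin_cases j <;> norm_num [Fin.sum_univ_three, U, Matrix.cons_val_two, Matrix.tail_cons]
end

section
/- Let G be a zero-sum game with row payoff matrix U and value v*, and let P be a pure portfolio of columns such that the complement set A2 \ P is ε-dominated by mixtures over P (for each j ∉ P there exists a mixture p over P with x^T U p ≤ x^T U e_j + ε for all row strategies x). Then every Nash equilibrium row strategy of the restricted game G(A1, P) is an ε-maximin strategy of G: its worst-case payoff over all columns of the full game is at least v* − ε. Consequently the pessimistic exploitability of P is at most ε. -/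
open Finset Matrix

lemma pay_restrict_aux {m n : ℕ} (U : Matrix (Fin m) (Fin n) ℝ) (P : Finset (Fin n))
    (x : Fin m → ℝ) (q : Fin n → ℝ) (hq : ∀ j ∉ P, q j = 0) :
    pay U x q = pay (Matrix.of fun i (j : {j // j ∈ P}) => U i j.1) x (fun k => q k.1) := by
  unfold pay
  refine Finset.sum_congr rfl fun i _ => ?_
  simp only [Matrix.of_apply]
  rw [Finset.sum_coe_sort P (fun j => x i * U i j * q j)]
  exact (Finset.sum_subset P.subset_univ (fun j _ hj => by rw [hq j hj, mul_zero])).symm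

lemma pay_pure {m n : ℕ} (U : Matrix (Fin m) (Fin n) ℝ) (x : Fin m → ℝ) (j : Fin n) :
    pay U x (fun j' => if j' = j then 1 else 0) = ∑ i, x i * U i j := by
  unfold pay
  refine Finset.sum_congr rfl fun i _ => ?_
  simp [mul_ite, Finset.sum_ite_eq']

lemma pure_mem_simplex {α : Type*} [Fintype α] [DecidableEq α] (a : α) :
    (fun b => if b = a then (1:ℝ) else 0) ∈ simplex α := by
  constructor
  · intro b; dsimp only; split <;> norm_num
  · simp [Finset.sum_ite_eq']

theorem stmt13 (m n : ℕ) (U : Matrix (Fin m) (Fin n) ℝ) (ε : ℝ) (hε : 0 ≤ ε)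
    (P : Finset (Fin n))
    (hdom : ∀ j ∉ P, ∃ p ∈ simplex (Fin n), (∀ j', p j' ≠ 0 → j' ∈ P) ∧
      ∀ x ∈ simplex (Fin m),
        pay U x p ≤ pay U x (fun j' => if j' = j then 1 else 0) + ε)
    (vstar : ℝ) (hval : ∃ x y, isNash U x y ∧ pay U x y = vstar) :
    ∀ (x : Fin m → ℝ) (y : {j // j ∈ P} → ℝ),
      isNash (Matrix.of fun i (j : {j // j ∈ P}) => U i j.1) x y →
      vstar - ε ≤ wc U x := by
  obtain ⟨xs, ys, ⟨hxs, hys, hxsbest, hysbest⟩, hv⟩ := hval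
  intro x y ⟨hx, hy, hxbest, hybest⟩
  -- extension of y to Fin n
  set yt : Fin n → ℝ := fun j => if h : j ∈ P then y ⟨j, h⟩ else 0 with hyt
  have hyt0 : ∀ j ∉ P, yt j = 0 := fun j hj => dif_neg hj
  have hytres : (fun k : {j // j ∈ P} => yt k.1) = y := by
    funext k; exact dif_pos k.2
  have hytsimplex : yt ∈ simplex (Fin n) := by
    constructor
    · intro j; by_cases h : j ∈ P
      · rw [hyt]; simp only [dif_pos h]; exact hy.1 ⟨j, h⟩
      · rw [hyt0 j h]
    · rw [← Finset.sum_subset P.subset_univ (fun j _ hj => hyt0 j hj),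
        ← Finset.sum_coe_sort P yt]
      calc ∑ k : {j // j ∈ P}, yt k.1 = ∑ k, y k := by rw [show (fun k : {j // j ∈ P} => yt k.1) = y from hytres]
        _ = 1 := hy.2
  have hpayyt : pay U x yt = pay (Matrix.of fun i (j : {j // j ∈ P}) => U i j.1) x y := by
    rw [pay_restrict_aux U P x yt hyt0, hytres]
  have hpayyt' : pay U xs yt = pay (Matrix.of fun i (j : {j // j ∈ P}) => U i j.1) xs y := by
    rw [pay_restrict_aux U P xs yt hyt0, hytres]
  -- restricted value ≥ vstar
  have hvbar : vstar ≤ pay (Matrix.of fun i (j : {j // j ∈ P}) => U i j.1) x y := by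
    calc vstar = pay U xs ys := hv.symm
      _ ≤ pay U xs yt := hysbest yt hytsimplex
      _ = pay (Matrix.of fun i (j : {j // j ∈ P}) => U i j.1) xs y := hpayyt'
      _ ≤ pay (Matrix.of fun i (j : {j // j ∈ P}) => U i j.1) x y := hxbest xs hxs
  have key : ∀ j : Fin n, vstar - ε ≤ ∑ i, x i * U i j := by
    intro j
    by_cases hj : j ∈ P
    · -- pure restricted strategy at ⟨j, hj⟩
      have hmem := pure_mem_simplex (α := {j // j ∈ P}) ⟨j, hj⟩
      have hle := hybest _ hmem
      have : pay (Matrix.of fun i (k : {j // j ∈ P}) => U i k.1) x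
          (fun k => if k = ⟨j, hj⟩ then (1:ℝ) else 0) = ∑ i, x i * U i j := by
        unfold pay
        refine Finset.sum_congr rfl fun i _ => ?_
        simp [mul_ite, Finset.sum_ite_eq']
      linarith [hvbar, hle, this ▸ hle]
    · obtain ⟨p, hp, hpsupp, hpdom⟩ := hdom j hj
      have hp0 : ∀ j' ∉ P, p j' = 0 := fun j' hj' => by
        by_contra h; exact hj' (hpsupp j' h)
      have hpres : (fun k : {j // j ∈ P} => p k.1) ∈ simplex {j // j ∈ P} := by
        constructor
        · intro k; exact hp.1 k.1
        · rw [Finset.sum_coe_sort P p, Finset.sum_subset P.subset_univ (fun j' _ hj' => hp0 j' hj')]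
          exact hp.2
      have h1 : pay (Matrix.of fun i (j : {j // j ∈ P}) => U i j.1) x y ≤ pay U x p := by
        rw [pay_restrict_aux U P x p hp0]
        exact hybest _ hpres
      have h2 := hpdom x hx
      rw [pay_pure] at h2
      linarith [hvbar]
  -- conclude about wc
  have hne : (Set.range fun j : Fin n => ∑ i, x i * U i j).Nonempty := by
    have : Nonempty (Fin n) := by
      by_contra h
      rw [not_nonempty_iff] at h
      have := hys.2
      rw [Finset.univ_eq_empty, Finset.sum_empty] at this
      norm_num at this
    exact Set.range_nonempty _
  unfold wc
  apply le_csInf hne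
  rintro b ⟨j, rfl⟩
  exact key j
end

section
/- In the 3×3 zero-sum game with row payoff matrix U = [[1,0,1/2],[0,1,1/2],[0,0,1/2]] augmented by appending r additional copies of the row (0,0,1/2) (giving a (3+r)×3 matrix), restricting the column player to the portfolio {column 3} makes every row strategy a Nash equilibrium strategy of the restricted game, and the maximum-entropy (uniform) row strategy x over all 3+r rows satisfies min_{j∈{1,2}} (x^T U)_j = 1/(3+r), so its exploitability relative to the game value 1/2 is 1/2 − 1/(3+r), which tends to 1/2 as r → ∞. -/
open Finset Matrix

noncomputable section Aux

def Umat (r : ℕ) : Matrix (Fin (3 + r)) (Fin 3) ℝ :=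
  Matrix.of fun i j =>
    if (i : ℕ) = 0 then ![1,0,1/2] j
    else if (i : ℕ) = 1 then ![0,1,1/2] j
    else ![0,0,1/2] j

def URmat (r : ℕ) : Matrix (Fin (3 + r)) (Fin 1) ℝ :=
  Matrix.of fun i _ => Umat r i 2

lemma U_apply0 (r : ℕ) (i : Fin (3 + r)) :
    Umat r i 0 = if (i : ℕ) = 0 then 1 else 0 := by
  simp only [Umat, Matrix.of_apply]
  split_ifs <;> first | simp | omega

lemma U_apply1 (r : ℕ) (i : Fin (3 + r)) :
    Umat r i 1 = if (i : ℕ) = 1 then 1 else 0 := by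
  simp only [Umat, Matrix.of_apply]
  split_ifs <;> simp_all

lemma U_apply2 (r : ℕ) (i : Fin (3 + r)) : Umat r i 2 = 1/2 := by
  simp only [Umat, Matrix.of_apply]
  split_ifs <;> simp

lemma sum_ite_coe {n : ℕ} (k : ℕ) (hk : k < n) (f : Fin n → ℝ) :
    ∑ i : Fin n, (if (i : ℕ) = k then f i else 0) = f ⟨k, hk⟩ := by
  rw [Finset.sum_eq_single (⟨k, hk⟩ : Fin n)]
  · simp
  · intro b _ hb
    have : (b : ℕ) ≠ k := fun h => hb (Fin.ext h)
    simp [this]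
  · simp

lemma col0 (r : ℕ) (x : Fin (3 + r) → ℝ) :
    ∑ i, x i * Umat r i 0 = x ⟨0, by omega⟩ := by
  have : ∀ i : Fin (3 + r), x i * Umat r i 0 = if (i : ℕ) = 0 then x i else 0 := by
    intro i; rw [U_apply0]; split_ifs <;> ring
  rw [Finset.sum_congr rfl fun i _ => this i, sum_ite_coe 0 (by omega)]

lemma col1 (r : ℕ) (x : Fin (3 + r) → ℝ) :
    ∑ i, x i * Umat r i 1 = x ⟨1, by omega⟩ := by
  have : ∀ i : Fin (3 + r), x i * Umat r i 1 = if (i : ℕ) = 1 then x i else 0 := by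
    intro i; rw [U_apply1]; split_ifs <;> ring
  rw [Finset.sum_congr rfl fun i _ => this i, sum_ite_coe 1 (by omega)]

lemma col2 (r : ℕ) (x : Fin (3 + r) → ℝ) :
    ∑ i, x i * Umat r i 2 = (1/2) * ∑ i, x i := by
  rw [Finset.mul_sum]
  refine Finset.sum_congr rfl fun i _ => ?_
  rw [U_apply2]; ring

lemma pay_eq (r : ℕ) (x : Fin (3 + r) → ℝ) (y : Fin 3 → ℝ) :
    pay (Umat r) x y =
      (∑ i, x i * Umat r i 0) * y 0 + (∑ i, x i * Umat r i 1) * y 1 +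
        (∑ i, x i * Umat r i 2) * y 2 := by
  unfold pay
  simp only [Fin.sum_univ_three]
  rw [Finset.sum_add_distrib, Finset.sum_add_distrib, ← Finset.sum_mul, ← Finset.sum_mul,
    ← Finset.sum_mul]

lemma payUR_eq (r : ℕ) (x : Fin (3 + r) → ℝ) (y : Fin 1 → ℝ) :
    pay (URmat r) x y = (∑ i, x i) * ((1/2) * y 0) := by
  unfold pay
  simp only [Fin.sum_univ_one]
  rw [Finset.sum_mul]
  refine Finset.sum_congr rfl fun i _ => ?_
  have h : URmat r i 0 = 1/2 := U_apply2 r i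
  rw [h]; ring

lemma mainAux (r : ℕ) :
    (∀ x y, isNash (Umat r) x y → pay (Umat r) x y = 1/2) ∧
    (∀ x ∈ simplex (Fin (3 + r)), ∃ y, isNash (URmat r) x y) ∧
    wc (Umat r) (fun _ => 1 / (3 + r : ℝ)) = 1 / (3 + r : ℝ) ∧
    1/2 - wc (Umat r) (fun _ => 1 / (3 + r : ℝ)) = 1/2 - 1/(3 + r : ℝ) := by
  have hr3 : (0 : ℝ) < (3 + r : ℝ) := by positivity
  have hwc : wc (Umat r) (fun _ => 1 / (3 + r : ℝ)) = 1 / (3 + r : ℝ) := by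
    have hf : (fun j : Fin 3 => ∑ i, (1 / (3 + r : ℝ)) * Umat r i j) =
        fun j => ![1 / (3 + r : ℝ), 1 / (3 + r : ℝ), 1/2] j := by
      funext j
      fin_cases j
      · show ∑ i, (1 / (3 + r : ℝ)) * Umat r i 0 = 1 / (3 + r : ℝ)
        rw [col0]
      · show ∑ i, (1 / (3 + r : ℝ)) * Umat r i 1 = 1 / (3 + r : ℝ)
        rw [col1]
      · show ∑ i, (1 / (3 + r : ℝ)) * Umat r i 2 = 1/2
        rw [col2 r (fun _ => 1 / (3 + r : ℝ))]
        simp only [Finset.sum_const, Finset.card_univ, Fintype.card_fin, nsmul_eq_mul]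
        have h1 : ((3 + r : ℕ) : ℝ) * (1 / (3 + r : ℝ)) = 1 := by
          push_cast; field_simp
        rw [h1]; ring
    have hrange : Set.range (fun j : Fin 3 => ∑ i, (1 / (3 + r : ℝ)) * Umat r i j) =
        {1 / (3 + r : ℝ), (1/2 : ℝ)} := by
      rw [hf]
      ext z
      constructor
      · rintro ⟨j, rfl⟩
        fin_cases j <;> simp
      · rintro (rfl | rfl)
        · exact ⟨0, by simp⟩
        · exact ⟨2, by simp⟩
    unfold wc
    rw [hrange, csInf_pair]
    have hle : 1 / (3 + r : ℝ) ≤ 1/2 := by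
      rw [div_le_div_iff₀ hr3 (by norm_num)]
      nlinarith
    exact min_eq_left hle
  refine ⟨?_, ?_, hwc, by rw [hwc]⟩
  · -- Nash value is 1/2
    rintro x y ⟨hx, hy, hxbest, hybest⟩
    -- pure column 3
    set y' : Fin 3 → ℝ := fun j => if j = 2 then 1 else 0 with hy'
    have hy'sim : y' ∈ simplex (Fin 3) := by
      constructor
      · intro j; simp only [hy']; split_ifs <;> norm_num
      · simp [hy', Fin.sum_univ_three]
    have hpayy' : pay (Umat r) x y' = 1/2 := by
      rw [pay_eq, col0, col1, col2]
      have h0 : y' 0 = 0 := by simp [hy']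
      have h1 : y' 1 = 0 := by simp [hy']
      have h2 : y' 2 = 1 := by simp [hy']
      rw [h0, h1, h2, hx.2]; ring
    -- row strategy (1/2, 1/2, 0, ...)
    set x' : Fin (3 + r) → ℝ := fun i =>
      if (i : ℕ) = 0 then 1/2 else if (i : ℕ) = 1 then 1/2 else 0 with hx'
    have hx'split : ∀ i : Fin (3 + r),
        x' i = (if (i : ℕ) = 0 then (1/2 : ℝ) else 0) + (if (i : ℕ) = 1 then (1/2 : ℝ) else 0) := by
      intro i
      by_cases h0 : (i : ℕ) = 0 <;> by_cases h1 : (i : ℕ) = 1 <;> simp only [hx', h0, h1] <;> norm_num <;> omega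
    have hx'sum : ∑ i, x' i = 1 := by
      rw [Finset.sum_congr rfl fun i _ => hx'split i, Finset.sum_add_distrib,
        sum_ite_coe 0 (by omega) (fun _ => (1/2 : ℝ)),
        sum_ite_coe 1 (by omega) (fun _ => (1/2 : ℝ))]
      norm_num
    have hx'sim : x' ∈ simplex (Fin (3 + r)) := by
      refine ⟨fun i => ?_, hx'sum⟩
      simp only [hx']; split_ifs <;> norm_num
    have hpayx' : pay (Umat r) x' y = 1/2 := by
      rw [pay_eq, col0, col1, col2, hx'sum]
      have h0 : x' ⟨0, by omega⟩ = 1/2 := by simp [hx']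
      have h1 : x' ⟨1, by omega⟩ = 1/2 := by simp [hx']
      rw [h0, h1]
      have := hy.2
      rw [Fin.sum_univ_three] at this
      linarith
    have hub := hybest y' hy'sim
    have hlb := hxbest x' hx'sim
    rw [hpayy'] at hub
    rw [hpayx'] at hlb
    linarith
  · -- restricted game: every x is a Nash strategy
    intro x hx
    refine ⟨fun _ => 1, ⟨hx, ⟨fun _ => by norm_num, by simp⟩, ?_, ?_⟩⟩
    · intro x' hx'
      rw [payUR_eq, payUR_eq, hx.2, hx'.2]
    · intro y' hy'
      have hy0 : y' 0 = 1 := by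
        have := hy'.2
        rwa [Fin.sum_univ_one] at this
      rw [payUR_eq, payUR_eq, hy0]

end Aux

theorem stmt17 :
    (∀ r : ℕ,
      let U : Matrix (Fin (3 + r)) (Fin 3) ℝ :=
        Matrix.of fun i j =>
          if (i : ℕ) = 0 then ![1,0,1/2] j
          else if (i : ℕ) = 1 then ![0,1,1/2] j
          else ![0,0,1/2] j
      let UR : Matrix (Fin (3 + r)) (Fin 1) ℝ := Matrix.of fun i _ => U i 2
      (∀ x y, isNash U x y → pay U x y = 1/2) ∧
      (∀ x ∈ simplex (Fin (3 + r)), ∃ y, isNash UR x y) ∧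
      wc U (fun _ => 1 / (3 + r : ℝ)) = 1 / (3 + r : ℝ) ∧
      1/2 - wc U (fun _ => 1 / (3 + r : ℝ)) = 1/2 - 1/(3 + r : ℝ)) ∧
    Filter.Tendsto (fun r : ℕ => 1/2 - 1/(3 + r : ℝ)) Filter.atTop (nhds (1/2)) := by
  constructor
  · intro r
    exact mainAux r
  · have h1 : Filter.Tendsto (fun r : ℕ => (3 + r : ℝ)) Filter.atTop Filter.atTop := by
      exact Filter.tendsto_atTop_add_const_left _ 3 tendsto_natCast_atTop_atTop
    have h2 : Filter.Tendsto (fun r : ℕ => 1 / (3 + r : ℝ)) Filter.atTop (nhds 0) := by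
      simpa [one_div, Pi.inv_def] using h1.inv_tendsto_atTop
    have h3 := (tendsto_const_nhds (x := (1/2 : ℝ)) (f := Filter.atTop (α := ℕ))).sub h2
    simpa using h3
end
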